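/- arXiv:2003.09844 — 2 statements merged into one kernel-verified Lean document; each statement's English description precedes it below -/
import Mathlib

section
/- For vectors x(1),…,x(N) ∈ ℝᵈ, any w = (w¹,…,wᵏ) with wʲ ∈ ℝᵈ, define a(x,w) ∈ ℝ^{kd} as the stack of blocks 𝟙{xᵀwʲ ≥ 0}·x for j = 1,…,k, and define ā(x) ∈ ℝ^{kd} as the stack of k copies of x. Then λ_max(∑_{i=1}^N ā(x(i)) ā(x(i))ᵀ) ≥ λ_max(∑_{i=1}^N a(x(i),w) a(x(i),w)ᵀ) for every w. -/
/-!
Split `v ∈ ℝ^{kd}` into blocks `v_j ∈ ℝᵈ` and let `G = ∑ᵢ x(i) x(i)ᵀ`. Since the gates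
`𝟙{xᵀwʲ ≥ 0}` lie in `{0, 1}`, Cauchy–Schwarz over the `k` blocks gives
`(a(x,w)ᵀ v)² ≤ k ∑ⱼ (xᵀ vⱼ)²`, hence `vᵀ S v ≤ k ∑ⱼ vⱼᵀ G vⱼ`. Testing `S̄` on the replicated
vector `ā(u)` gives `k² uᵀ G u ≤ λ_max(S̄) · k ‖u‖²`. Together these bound the Rayleigh quotient
of `S`, and hence its eigenvalues, by `λ_max(S̄)`.
-/

/-- The stacked vector `a(x,w)` whose `j`-th block is `𝟙{xᵀwʲ ≥ 0}·x`. -/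
noncomputable def avec {k d : ℕ} (x : Fin d → ℝ) (w : Fin k → Fin d → ℝ) :
    Fin k × Fin d → ℝ :=
  fun p => (if 0 ≤ ∑ i, x i * w p.1 i then (1 : ℝ) else 0) * x p.2

/-- The stacked vector `ā(x)` consisting of `k` copies of `x`. -/
def abar {k d : ℕ} (x : Fin d → ℝ) : Fin k × Fin d → ℝ := fun p => x p.2

open Matrix Finset

open scoped MatrixOrder in
theorem Matrix.IsHermitian.forall_eigenvalues_le_iff {n : Type*} [Fintype n] [DecidableEq n]
    {A : Matrix n n ℝ} (hA : A.IsHermitian) (c : ℝ) :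
    (∀ i, hA.eigenvalues i ≤ c) ↔ ∀ v, v ⬝ᵥ A *ᵥ v ≤ c * (v ⬝ᵥ v) := by
  have hspec := le_algebraMap_iff_spectrum_le (R := ℝ) (r := c) (a := A) hA.isSelfAdjoint
  rw [hA.spectrum_real_eq_range_eigenvalues, Set.forall_mem_range] at hspec
  have hH : (c • (1 : Matrix n n ℝ) - A).IsHermitian :=
    (isHermitian_one.smul (IsSelfAdjoint.all c)).sub hA
  rw [← hspec, le_iff, Algebra.algebraMap_eq_smul_one, posSemidef_iff_dotProduct_mulVec]
  simp only [hH, true_and, star_trivial, sub_mulVec, smul_mulVec, one_mulVec, dotProduct_sub,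
    dotProduct_smul, smul_eq_mul, sub_nonneg]

theorem Matrix.dotProduct_sum_vecMulVec_self_mulVec {ι n α : Type*} [Fintype ι] [Fintype n]
    [CommSemiring α] (a : ι → n → α) (v : n → α) :
    v ⬝ᵥ (∑ i, vecMulVec (a i) (a i)) *ᵥ v = ∑ i, (a i ⬝ᵥ v) ^ 2 := by
  rw [sum_mulVec, dotProduct_sum]
  refine sum_congr rfl fun i _ => ?_
  simp [vecMulVec_mulVec, dotProduct_comm v, sq]

theorem Matrix.dotProduct_eq_sum_curry {ι κ α : Type*} [Fintype ι] [Fintype κ]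
    [NonUnitalNonAssocSemiring α] (v w : ι × κ → α) :
    v ⬝ᵥ w = ∑ j, Function.curry v j ⬝ᵥ Function.curry w j := by
  simp only [dotProduct, Fintype.sum_prod_type, Function.curry_apply]

theorem avec_dotProduct {k d : ℕ} (x : Fin d → ℝ) (w : Fin k → Fin d → ℝ)
    (v : Fin k × Fin d → ℝ) :
    avec x w ⬝ᵥ v =
      ∑ j, (if 0 ≤ ∑ i, x i * w j i then (1 : ℝ) else 0) * (x ⬝ᵥ Function.curry v j) := by
  rw [dotProduct_eq_sum_curry]
  refine sum_congr rfl fun j _ => ?_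
  simp only [dotProduct, mul_sum, Function.curry_apply, avec, mul_assoc]

theorem abar_dotProduct_abar {k d : ℕ} (x y : Fin d → ℝ) :
    abar (k := k) x ⬝ᵥ abar y = k * (x ⬝ᵥ y) := by
  rw [dotProduct_eq_sum_curry]
  change ∑ _j : Fin k, x ⬝ᵥ y = _
  simp

theorem sq_avec_dotProduct_le {k d : ℕ} (x : Fin d → ℝ) (w : Fin k → Fin d → ℝ)
    (v : Fin k × Fin d → ℝ) :
    (avec x w ⬝ᵥ v) ^ 2 ≤ k * ∑ j, (x ⬝ᵥ Function.curry v j) ^ 2 := by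
  set gate : Fin k → ℝ := fun j => if 0 ≤ ∑ i, x i * w j i then 1 else 0
  have hgate : ∑ j, gate j ^ 2 ≤ k := by
    calc ∑ j, gate j ^ 2 ≤ ∑ _j : Fin k, (1 : ℝ) :=
          sum_le_sum fun j _ => by simp only [gate]; split_ifs <;> norm_num
      _ = k := by simp
  rw [avec_dotProduct]
  calc (∑ j, gate j * (x ⬝ᵥ Function.curry v j)) ^ 2
      ≤ (∑ j, gate j ^ 2) * ∑ j, (x ⬝ᵥ Function.curry v j) ^ 2 := sum_mul_sq_le_sq_mul_sq _ _ _
    _ ≤ k * ∑ j, (x ⬝ᵥ Function.curry v j) ^ 2 := by gcongr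

section RayleighBound

variable {k d N : ℕ} (X : Fin N → Fin d → ℝ) {c : ℝ}

theorem natCast_mul_sum_sq_dotProduct_le (hk : 0 < k)
    (hc : ∀ v, v ⬝ᵥ (∑ i, vecMulVec (abar (k := k) (X i)) (abar (X i))) *ᵥ v ≤ c * (v ⬝ᵥ v))
    (u : Fin d → ℝ) :
    k * ∑ i, (X i ⬝ᵥ u) ^ 2 ≤ c * (u ⬝ᵥ u) := by
  have hu := hc (abar u)
  simp only [dotProduct_sum_vecMulVec_self_mulVec, abar_dotProduct_abar] at hu
  have hk' : (0 : ℝ) < k := by exact_mod_cast hk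
  refine le_of_mul_le_mul_left ?_ hk'
  calc (k : ℝ) * (k * ∑ i, (X i ⬝ᵥ u) ^ 2) = ∑ i, (k * (X i ⬝ᵥ u)) ^ 2 := by
        simp only [mul_sum, mul_pow]; ring_nf
    _ ≤ c * (k * (u ⬝ᵥ u)) := hu
    _ = k * (c * (u ⬝ᵥ u)) := by ring

theorem dotProduct_sum_vecMulVec_avec_mulVec_le (hk : 0 < k) (w : Fin k → Fin d → ℝ)
    (hc : ∀ v, v ⬝ᵥ (∑ i, vecMulVec (abar (k := k) (X i)) (abar (X i))) *ᵥ v ≤ c * (v ⬝ᵥ v))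
    (v : Fin k × Fin d → ℝ) :
    v ⬝ᵥ (∑ i, vecMulVec (avec (X i) w) (avec (X i) w)) *ᵥ v ≤ c * (v ⬝ᵥ v) := by
  calc v ⬝ᵥ (∑ i, vecMulVec (avec (X i) w) (avec (X i) w)) *ᵥ v
      = ∑ i, (avec (X i) w ⬝ᵥ v) ^ 2 := dotProduct_sum_vecMulVec_self_mulVec _ v
    _ ≤ ∑ i, k * ∑ j, (X i ⬝ᵥ Function.curry v j) ^ 2 :=
        sum_le_sum fun i _ => sq_avec_dotProduct_le (X i) w v
    _ = ∑ j, k * ∑ i, (X i ⬝ᵥ Function.curry v j) ^ 2 := by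
        simp only [← mul_sum]; rw [sum_comm]
    _ ≤ ∑ j, c * (Function.curry v j ⬝ᵥ Function.curry v j) :=
        sum_le_sum fun j _ => natCast_mul_sum_sq_dotProduct_le X hk hc _
    _ = c * (v ⬝ᵥ v) := by rw [← mul_sum, dotProduct_eq_sum_curry]

end RayleighBound

theorem lammax_abar_ge_lammax_a {k d N : ℕ} (X : Fin N → Fin d → ℝ)
    (w : Fin k → Fin d → ℝ)
    (hS : (∑ i, Matrix.vecMulVec (avec (X i) w) (avec (X i) w)).IsHermitian)
    (hSbar : (∑ i, Matrix.vecMulVec (abar (k := k) (X i)) (abar (k := k) (X i))).IsHermitian) :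
    ⨆ p, hS.eigenvalues p ≤ ⨆ p, hSbar.eigenvalues p := by
  rcases isEmpty_or_nonempty (Fin k × Fin d) with hempty | hne
  · simp only [iSup_of_empty', le_refl]
  have hSbar_le := (hSbar.forall_eigenvalues_le_iff _).1
    fun p => le_ciSup (Set.finite_range hSbar.eigenvalues).bddAbove p
  exact ciSup_le <| (hS.forall_eigenvalues_le_iff _).2 <|
    dotProduct_sum_vecMulVec_avec_mulVec_le X hne.some.1.pos w hSbar_le
end

section
/- Brauer's ovals of Cassini bound: for an n×n real matrix A (n ≥ 2) with real eigenvalue λ, there exist indices i ≠ j such that |λ - a_{ii}|·|λ - a_{jj}| ≤ R_i(A)·R_j(A), where R_i(A) = ∑_{l≠i}|a_{il}|. -/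
/-!
Take an eigenvector `v`, let `i` be an index where `|v i|` is largest and `j` one where it is
largest among the remaining indices. Row `k` of `A v = μ v` reads
`(μ - A k k) v k = ∑_{l ≠ k} A k l v l`, so `|μ - A i i| |v i| ≤ R_i |v j|` and
`|μ - A j j| |v j| ≤ R_j |v i|`. Multiplying the two and cancelling `|v i| |v j|` gives the bound;
if `v j = 0`, the first inequality already forces `μ = A i i`.
-/

open Finset

theorem Fintype.exists_ne_forall_le_and_forall_ne_le {ι α : Type*} [Fintype ι] [Nontrivial ι]
    [LinearOrder α] (f : ι → α) :
    ∃ i j, i ≠ j ∧ (∀ l, f l ≤ f i) ∧ ∀ l, l ≠ i → f l ≤ f j := by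
  classical
  obtain ⟨i, -, hi⟩ := exists_max_image univ f univ_nonempty
  obtain ⟨j, hj_mem, hj⟩ := exists_max_image (univ.erase i) f univ_nontrivial.erase_nonempty
  exact ⟨i, j, (ne_of_mem_erase hj_mem).symm, fun l => hi l (mem_univ l),
    fun l hl => hj l (mem_erase.mpr ⟨hl, mem_univ l⟩)⟩

theorem mul_le_mul_of_cross_le {K : Type*} [CommRing K] [LinearOrder K] [IsStrictOrderedRing K]
    {a b r s x y : K} (hb : 0 ≤ b) (hr : 0 ≤ r) (hs : 0 ≤ s) (hx : 0 < x) (hy : 0 ≤ y)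
    (hax : a * x ≤ r * y) (hby : b * y ≤ s * x) : a * b ≤ r * s := by
  rcases hy.eq_or_lt with rfl | hy
  · have ha : a ≤ 0 := nonpos_of_mul_nonpos_left (by simpa using hax) hx
    exact (mul_nonpos_of_nonpos_of_nonneg ha hb).trans (mul_nonneg hr hs)
  · refine le_of_mul_le_mul_right ?_ (mul_pos hx hy)
    calc a * b * (x * y) = (a * x) * (b * y) := by ring
      _ ≤ (r * y) * (s * x) := mul_le_mul hax hby (mul_nonneg hb hy.le) (mul_nonneg hr hy.le)
      _ = r * s * (x * y) := by ring

namespace Matrix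

variable {ι K : Type*} [Fintype ι] [DecidableEq ι] [CommRing K]

theorem sub_diag_mul_eq_sum_erase {A : Matrix ι ι K} {μ : K} {v : ι → K} (h : A *ᵥ v = μ • v)
    (k : ι) : (μ - A k k) * v k = ∑ l ∈ univ.erase k, A k l * v l := by
  have hk : ∑ l, A k l * v l = μ * v k := by simpa [mulVec, dotProduct] using congrFun h k
  rw [← add_sum_erase _ _ (mem_univ k)] at hk
  linear_combination -hk

variable [LinearOrder K] [IsStrictOrderedRing K]

def deletedAbsRowSum (A : Matrix ι ι K) (i : ι) : K :=
  ∑ l ∈ univ.erase i, |A i l|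

theorem deletedAbsRowSum_nonneg (A : Matrix ι ι K) (i : ι) : 0 ≤ A.deletedAbsRowSum i :=
  sum_nonneg fun _ _ => abs_nonneg _

theorem abs_sub_diag_mul_le {A : Matrix ι ι K} {μ : K} {v : ι → K} (h : A *ᵥ v = μ • v)
    {k : ι} {c : K} (hc : ∀ l, l ≠ k → |v l| ≤ c) :
    |μ - A k k| * |v k| ≤ A.deletedAbsRowSum k * c := by
  rw [← abs_mul, sub_diag_mul_eq_sum_erase h, deletedAbsRowSum, sum_mul]
  refine (abs_sum_le_sum_abs _ _).trans (sum_le_sum fun l hl => ?_)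
  rw [abs_mul]
  exact mul_le_mul_of_nonneg_left (hc l (ne_of_mem_erase hl)) (abs_nonneg _)

theorem exists_ne_abs_sub_diag_mul_le [Nontrivial ι] (A : Matrix ι ι K) {μ : K} {v : ι → K}
    (hv : v ≠ 0) (h : A *ᵥ v = μ • v) :
    ∃ i j, i ≠ j ∧
      |μ - A i i| * |μ - A j j| ≤ A.deletedAbsRowSum i * A.deletedAbsRowSum j := by
  obtain ⟨i, j, hij, hi, hj⟩ := Fintype.exists_ne_forall_le_and_forall_ne_le fun l => |v l|
  obtain ⟨k, hk⟩ := Function.ne_iff.mp hv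
  have hvi : 0 < |v i| := (abs_pos.mpr hk).trans_le (hi k)
  exact ⟨i, j, hij, mul_le_mul_of_cross_le (abs_nonneg _) (deletedAbsRowSum_nonneg A i)
    (deletedAbsRowSum_nonneg A j) hvi (abs_nonneg _) (abs_sub_diag_mul_le h hj)
    (abs_sub_diag_mul_le h fun l _ => hi l)⟩

end Matrix

theorem brauer_ovals_of_cassini {n : ℕ} (hn : 2 ≤ n)
    (A : Matrix (Fin n) (Fin n) ℝ) (μ : ℝ)
    (v : Fin n → ℝ) (hv : v ≠ 0) (heig : A.mulVec v = μ • v) :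
    ∃ i j : Fin n, i ≠ j ∧
      |μ - A i i| * |μ - A j j| ≤
        (∑ l ∈ Finset.univ.erase i, |A i l|) * (∑ l ∈ Finset.univ.erase j, |A j l|) := by
  have : Nontrivial (Fin n) := Fin.nontrivial_iff_two_le.mpr hn
  exact A.exists_ne_abs_sub_diag_mul_le hv heig
end
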